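/- arXiv:1201.3579 — 3 statements merged into one kernel-verified Lean document; each statement's English description precedes it below -/
import Mathlib

section
/- Let (X_n), (ε_n), (V_n) be real sequences satisfying X_n = θX_{n−1} + ε_n and ε_n = ρε_{n−1} + V_n for all n ≥ 1, with |θ| < 1 and |ρ| < 1. Then for all n ≥ 1, ∑_{k=0}^{n} X_k² ≤ α X_0² + β ε_0² + β ∑_{k=1}^{n} V_k², where α = 1 + (1−|θ|)^{−2} and β = (1−|ρ|)^{−2}(1−|θ|)^{−2}. -/
/-! For an AR(1) recursion `u k = c * u (k - 1) + e k` (with `u (-1) = 0`, `e 0 = u 0`), Minkowski's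
inequality in `ℓ²({0, …, n})` gives `‖u‖ ≤ |c| ‖u‖ + ‖e‖`, since lagging does not increase the
norm; hence `‖u‖² ≤ (1 - |c|)⁻² ‖e‖²`. Applying this to `ε` with innovations `V` and to `X` with
innovations `ε` and chaining the two bounds gives the theorem. -/

open Finset

theorem Real.sqrt_sum_add_sq_le {ι : Type*} (s : Finset ι) (f g : ι → ℝ) :
    √(∑ i ∈ s, (f i + g i) ^ 2) ≤ √(∑ i ∈ s, f i ^ 2) + √(∑ i ∈ s, g i ^ 2) := by
  have hF := Real.sq_sqrt (sum_nonneg fun i (_ : i ∈ s) => sq_nonneg (f i))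
  have hG := Real.sq_sqrt (sum_nonneg fun i (_ : i ∈ s) => sq_nonneg (g i))
  have hexpand : ∑ i ∈ s, (f i + g i) ^ 2
      = ∑ i ∈ s, f i ^ 2 + 2 * ∑ i ∈ s, f i * g i + ∑ i ∈ s, g i ^ 2 := by
    simp only [add_sq, sum_add_distrib, mul_sum, mul_assoc]
  refine Real.sqrt_le_iff.mpr ⟨by positivity, ?_⟩
  nlinarith [Real.sum_mul_le_sqrt_mul_sqrt s f g]

theorem sum_range_sq_le_of_ar1 {c : ℝ} (hc : |c| < 1) {u w : ℕ → ℝ}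
    (h : ∀ n, 1 ≤ n → u n = c * u (n - 1) + w n) (n : ℕ) :
    ∑ k ∈ range (n + 1), u k ^ 2 ≤
      (1 - |c|)⁻¹ ^ 2 * (u 0 ^ 2 + ∑ k ∈ Icc 1 n, w k ^ 2) := by
  set lag : ℕ → ℝ := fun k => if k = 0 then 0 else u (k - 1)
  set e : ℕ → ℝ := fun k => if k = 0 then u 0 else w k
  have hdecomp : ∀ k, u k = c * lag k + e k := by
    rintro (_ | k)
    · simp [lag, e]
    · simpa [lag, e] using h (k + 1) (by omega)
  have hlag : ∑ k ∈ range (n + 1), lag k ^ 2 ≤ ∑ k ∈ range (n + 1), u k ^ 2 := by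
    rw [sum_range_succ' _ n, sum_range_succ]
    simpa [lag] using sq_nonneg (u n)
  have he : ∑ k ∈ range (n + 1), e k ^ 2 = u 0 ^ 2 + ∑ k ∈ Icc 1 n, w k ^ 2 := by
    rw [sum_range_succ', add_comm, ← Ico_add_one_right_eq_Icc, sum_Ico_eq_sum_range]
    simp [e, add_comm]
  set A := ∑ k ∈ range (n + 1), u k ^ 2
  have hA : √A ≤ |c| * √A + √(u 0 ^ 2 + ∑ k ∈ Icc 1 n, w k ^ 2) := by
    calc √A = √(∑ k ∈ range (n + 1), (c * lag k + e k) ^ 2) := by simp only [A, ← hdecomp]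
      _ ≤ √(∑ k ∈ range (n + 1), (c * lag k) ^ 2) + √(∑ k ∈ range (n + 1), e k ^ 2) :=
        Real.sqrt_sum_add_sq_le _ _ _
      _ = |c| * √(∑ k ∈ range (n + 1), lag k ^ 2) + √(∑ k ∈ range (n + 1), e k ^ 2) := by
        simp only [mul_pow, ← mul_sum, Real.sqrt_mul (sq_nonneg c), Real.sqrt_sq_eq_abs]
      _ ≤ _ := by rw [he]; gcongr
  have hroot : √A ≤ (1 - |c|)⁻¹ * √(u 0 ^ 2 + ∑ k ∈ Icc 1 n, w k ^ 2) := by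
    rw [inv_mul_eq_div, le_div_iff₀ (by linarith)]
    linarith
  have hsq := pow_le_pow_left₀ (Real.sqrt_nonneg A) hroot 2
  rwa [Real.sq_sqrt (by positivity), mul_pow, Real.sq_sqrt (by positivity)] at hsq

theorem stmt_6 (θ ρ : ℝ) (hθ : |θ| < 1) (hρ : |ρ| < 1)
    (X ε V : ℕ → ℝ)
    (hX : ∀ n, 1 ≤ n → X n = θ * X (n - 1) + ε n)
    (hε : ∀ n, 1 ≤ n → ε n = ρ * ε (n - 1) + V n) :
    ∀ n, 1 ≤ n →
      ∑ k ∈ Finset.range (n + 1), (X k) ^ 2 ≤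
        (1 + (1 - |θ|)⁻¹ ^ 2) * (X 0) ^ 2 +
        (1 - |ρ|)⁻¹ ^ 2 * (1 - |θ|)⁻¹ ^ 2 * (ε 0) ^ 2 +
        (1 - |ρ|)⁻¹ ^ 2 * (1 - |θ|)⁻¹ ^ 2 * ∑ k ∈ Finset.Icc 1 n, (V k) ^ 2 := by
  intro n _
  have hXsum := sum_range_sq_le_of_ar1 hθ hX n
  have hεsum : ∑ k ∈ Icc 1 n, ε k ^ 2 ≤ (1 - |ρ|)⁻¹ ^ 2 * (ε 0 ^ 2 + ∑ k ∈ Icc 1 n, V k ^ 2) :=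
    calc ∑ k ∈ Icc 1 n, ε k ^ 2 ≤ ∑ k ∈ range (n + 1), ε k ^ 2 :=
          sum_le_sum_of_subset_of_nonneg
            (fun k hk => by simp only [mem_Icc, mem_range] at hk ⊢; omega)
            fun k _ _ => sq_nonneg (ε k)
      _ ≤ _ := sum_range_sq_le_of_ar1 hρ hε n
  have hX0 : (1 - |θ|)⁻¹ ^ 2 * X 0 ^ 2 ≤ (1 + (1 - |θ|)⁻¹ ^ 2) * X 0 ^ 2 := by
    nlinarith [sq_nonneg (X 0)]
  calc ∑ k ∈ range (n + 1), X k ^ 2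
      ≤ (1 - |θ|)⁻¹ ^ 2 * (X 0 ^ 2 + (1 - |ρ|)⁻¹ ^ 2 * (ε 0 ^ 2 + ∑ k ∈ Icc 1 n, V k ^ 2)) :=
        hXsum.trans (by gcongr)
    _ ≤ _ := by linarith
end

section
/- Let (X_n), (ε_n), (V_n) be real sequences with X_n = θX_{n−1} + ε_n, ε_n = ρε_{n−1} + V_n for n ≥ 1, |θ| < 1, |ρ| < 1. Then for any η ≥ 0 and all n ≥ 1, ∑_{k=0}^{n} |X_k|^{2+η} ≤ α|X_0|^{2+η} + β|ε_0|^{2+η} + β ∑_{k=1}^{n} |V_k|^{2+η}, where α = 1 + (1−|θ|)^{−(2+η)} and β = (1−|ρ|)^{−(2+η)}(1−|θ|)^{−(2+η)}. -/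
/-!
For `x k = c * x (k - 1) + e k` with `a = |c| < 1` and `p ≥ 1`, Jensen's inequality for `t ↦ t ^ p`
with weights `a` and `1 - a` gives `|x k| ^ p ≤ a |x (k - 1)| ^ p + (1 - a) ^ (1 - p) |e k| ^ p`.
Summing over `k ≤ n` and absorbing the `a`-part of `∑ |x k| ^ p` into the left-hand side bounds
that sum by `(1 - a) ^ (-p) (|x 0| ^ p + ∑ |e k| ^ p)`. Applying this once to `X` driven by `ε` and
once to `ε` driven by `V` gives the theorem.
-/

open Finset

namespace Finset

variable {M : Type*} [AddCommMonoid M]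

theorem sum_range_succ_eq_add_sum_Icc (f : ℕ → M) (n : ℕ) :
    ∑ k ∈ range (n + 1), f k = f 0 + ∑ k ∈ Icc 1 n, f k := by
  rw [sum_range_eq_add_Ico f n.add_one_pos, Ico_add_one_right_eq_Icc]

theorem sum_Icc_sub_one_add (f : ℕ → M) (n : ℕ) :
    ∑ k ∈ Icc 1 n, f (k - 1) + f n = f 0 + ∑ k ∈ Icc 1 n, f k := by
  induction n with
  | zero => simp
  | succ n ih =>
    rw [sum_Icc_succ_top (by omega), sum_Icc_succ_top (by omega), add_tsub_cancel_right,
      ih, add_assoc]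

end Finset

theorem mul_add_rpow_le {p a u v : ℝ} (hp : 1 ≤ p) (ha₀ : 0 ≤ a) (ha₁ : a < 1)
    (hu : 0 ≤ u) (hv : 0 ≤ v) :
    (a * u + v) ^ p ≤ a * u ^ p + (1 - a) * (1 - a)⁻¹ ^ p * v ^ p := by
  have h1a : 0 < 1 - a := by linarith
  have hw : 0 ≤ (1 - a)⁻¹ * v := by positivity
  have hJensen := (convexOn_rpow hp).2 (Set.mem_Ici.2 hu) (Set.mem_Ici.2 hw) ha₀ h1a.le
    (add_sub_cancel a 1)
  simp only [smul_eq_mul, mul_inv_cancel_left₀ h1a.ne'] at hJensen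
  rwa [Real.mul_rpow (inv_nonneg.2 h1a.le) hv, ← mul_assoc] at hJensen

theorem abs_mul_add_rpow_le {p c x e : ℝ} (hp : 1 ≤ p) (hc : |c| < 1) :
    |c * x + e| ^ p ≤ |c| * |x| ^ p + (1 - |c|) * (1 - |c|)⁻¹ ^ p * |e| ^ p := by
  calc |c * x + e| ^ p ≤ (|c| * |x| + |e|) ^ p := by
        gcongr
        exact (abs_add_le _ _).trans_eq (by rw [abs_mul])
    _ ≤ _ := mul_add_rpow_le hp (abs_nonneg c) hc (abs_nonneg x) (abs_nonneg e)

theorem sum_Icc_abs_rpow_le_of_ar1 {p c : ℝ} {x e : ℕ → ℝ} (hp : 1 ≤ p) (hc : |c| < 1)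
    (hrec : ∀ k, 1 ≤ k → x k = c * x (k - 1) + e k) (n : ℕ) :
    ∑ k ∈ Icc 1 n, |x k| ^ p ≤
      (1 - |c|)⁻¹ ^ p * (|x 0| ^ p + ∑ k ∈ Icc 1 n, |e k| ^ p) := by
  set a := |c|
  set C := (1 - a)⁻¹ ^ p
  set S := ∑ k ∈ Icc 1 n, |x k| ^ p
  set E := ∑ k ∈ Icc 1 n, |e k| ^ p
  have h1a : 0 < 1 - a := by linarith
  have hshift : ∑ k ∈ Icc 1 n, |x (k - 1)| ^ p ≤ |x 0| ^ p + S := by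
    rw [← sum_Icc_sub_one_add (fun k ↦ |x k| ^ p) n]
    exact le_add_of_nonneg_right (by positivity)
  have hstep : S ≤ a * (|x 0| ^ p + S) + (1 - a) * C * E := by
    calc S ≤ ∑ k ∈ Icc 1 n, (a * |x (k - 1)| ^ p + (1 - a) * C * |e k| ^ p) := by
          refine sum_le_sum fun k hk ↦ ?_
          rw [hrec k (mem_Icc.1 hk).1]
          exact abs_mul_add_rpow_le hp hc
      _ = a * ∑ k ∈ Icc 1 n, |x (k - 1)| ^ p + (1 - a) * C * E := by
          rw [sum_add_distrib, mul_sum, mul_sum]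
      _ ≤ a * (|x 0| ^ p + S) + (1 - a) * C * E := by gcongr
  -- `(1 - a) * C = (1 - a) ^ (1 - p) ≥ 1 ≥ a`
  have ha_le : a ≤ (1 - a) * C := by
    have h1C : 1 ≤ (1 - a)⁻¹ := one_le_inv₀ h1a |>.2 (by linarith [abs_nonneg c])
    calc a ≤ (1 - a) * (1 - a)⁻¹ := by rw [mul_inv_cancel₀ h1a.ne']; exact hc.le
      _ ≤ (1 - a) * C := by
          gcongr
          simpa using Real.rpow_le_rpow_of_exponent_le h1C hp
  have hx0 : 0 ≤ |x 0| ^ p := by positivity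
  have habsorb : (1 - a) * S ≤ (1 - a) * (C * (|x 0| ^ p + E)) := by
    linarith [mul_le_mul_of_nonneg_right ha_le hx0]
  exact le_of_mul_le_mul_left habsorb h1a

theorem stmt_7 (θ ρ : ℝ) (hθ : |θ| < 1) (hρ : |ρ| < 1) (η : ℝ) (hη : 0 ≤ η)
    (X ε V : ℕ → ℝ)
    (hX : ∀ n, 1 ≤ n → X n = θ * X (n - 1) + ε n)
    (hε : ∀ n, 1 ≤ n → ε n = ρ * ε (n - 1) + V n) :
    ∀ n, 1 ≤ n →
      ∑ k ∈ Finset.range (n + 1), |X k| ^ (2 + η) ≤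
        (1 + (1 - |θ|)⁻¹ ^ (2 + η)) * |X 0| ^ (2 + η) +
        (1 - |ρ|)⁻¹ ^ (2 + η) * (1 - |θ|)⁻¹ ^ (2 + η) * |ε 0| ^ (2 + η) +
        (1 - |ρ|)⁻¹ ^ (2 + η) * (1 - |θ|)⁻¹ ^ (2 + η) *
          ∑ k ∈ Finset.Icc 1 n, |V k| ^ (2 + η) := by
  intro n _
  have hp : (1 : ℝ) ≤ 2 + η := by linarith
  have hXsum := sum_Icc_abs_rpow_le_of_ar1 hp hθ hX n
  have hεsum := sum_Icc_abs_rpow_le_of_ar1 hp hρ hε n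
  have hCθ : 0 ≤ (1 - |θ|)⁻¹ ^ (2 + η) := by
    have : 0 ≤ 1 - |θ| := by linarith
    positivity
  rw [sum_range_succ_eq_add_sum_Icc]
  calc |X 0| ^ (2 + η) + ∑ k ∈ Icc 1 n, |X k| ^ (2 + η)
      ≤ |X 0| ^ (2 + η) + (1 - |θ|)⁻¹ ^ (2 + η) *
          (|X 0| ^ (2 + η) + ∑ k ∈ Icc 1 n, |ε k| ^ (2 + η)) := by gcongr
    _ ≤ |X 0| ^ (2 + η) + (1 - |θ|)⁻¹ ^ (2 + η) * (|X 0| ^ (2 + η) +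
          (1 - |ρ|)⁻¹ ^ (2 + η) * (|ε 0| ^ (2 + η) + ∑ k ∈ Icc 1 n, |V k| ^ (2 + η))) := by
        gcongr
    _ = _ := by ring
end

section
/- Let θ, ρ ∈ ℝ with |θ| < 1, |ρ| < 1, θ ≠ −ρ, θ* = (θ+ρ)/(1+θρ), ℓ > 0, and let A = (ℓ(1+θρ)(1−(θ*)²))^{−1} · [[1−(θ*)², 0], [θρ+(θ*)², −(θ+ρ)]] and Λ = ℓ[[1, θ*], [θ*, 1]]. Then with σ² > 0 and ℓ = σ²(1+θρ)/((1−θ²)(1−θρ)(1−ρ²)), the matrix σ² A Λ A′ equals Γ = [[σ²_θ, θρσ²_θ], [θρσ²_θ, σ²_ρ]], where σ²_θ = (1−θ²)(1−θρ)(1−ρ²)/(1+θρ)³ and σ²_ρ = (1−θρ)/(1+θρ)³·((θ+ρ)²(1+θρ)² + (θρ)²(1−θ²)(1−ρ²)). -/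
/-!
Write `A = κ • B` with `κ = (1 - θρ) / σ²` and `B = [[a, 0], [b, c]]`. Completing the square,
`B [[1, t], [t, 1]] Bᵀ` has entries `a²`, `a (b + c t)` and `(b + c t)² + c² (1 - t²)`.
For `t = θ*` the relation `θ* (1 + θρ) = θ + ρ` gives `b + c t = θρ a`, so the off-diagonal
entry is `θρ` times the corner one; with `a = 1 - θ*² = (1 - θ²)(1 - ρ²)/(1 + θρ)²` what remains
is a rational identity.
-/

open Matrix

theorem Matrix.lowerFinTwo_mul_mul_transpose {R : Type*} [CommRing R] (a b c t : R) :
    !![a, 0; b, c] * !![1, t; t, 1] * !![a, 0; b, c]ᵀ =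
      !![a ^ 2, a * (b + c * t); a * (b + c * t), (b + c * t) ^ 2 + c ^ 2 * (1 - t ^ 2)] := by
  ext i j
  fin_cases i <;> fin_cases j <;> simp [Matrix.mul_apply] <;> ring

theorem abs_mul_lt_one {α : Type*} [Ring α] [LinearOrder α] [IsStrictOrderedRing α] {x y : α}
    (hx : |x| < 1) (hy : |y| < 1) : |x * y| < 1 := by
  rw [abs_mul]
  exact mul_lt_one_of_nonneg_of_lt_one_left (abs_nonneg x) hx hy.le

theorem one_sub_div_one_add_mul_sq {K : Type*} [Field K] {θ ρ : K} (h : 1 + θ * ρ ≠ 0) :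
    1 - ((θ + ρ) / (1 + θ * ρ)) ^ 2 = (1 - θ ^ 2) * (1 - ρ ^ 2) / (1 + θ * ρ) ^ 2 := by
  field_simp
  ring

theorem stmt_17_general (θ ρ σ2 : ℝ) (hθ : |θ| < 1) (hρ : |ρ| < 1)
    (hσ : 0 < σ2) :
    let θs : ℝ := (θ + ρ) / (1 + θ * ρ)
    let ℓ : ℝ := σ2 * (1 + θ * ρ) / ((1 - θ ^ 2) * (1 - θ * ρ) * (1 - ρ ^ 2))
    let A : Matrix (Fin 2) (Fin 2) ℝ := (ℓ * (1 + θ * ρ) * (1 - θs ^ 2))⁻¹ •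
      !![1 - θs ^ 2, 0; θ * ρ + θs ^ 2, -(θ + ρ)]
    let Λ : Matrix (Fin 2) (Fin 2) ℝ := ℓ • !![1, θs; θs, 1]
    let σθ2 : ℝ := (1 - θ ^ 2) * (1 - θ * ρ) * (1 - ρ ^ 2) / (1 + θ * ρ) ^ 3
    let σρ2 : ℝ := (1 - θ * ρ) / (1 + θ * ρ) ^ 3 *
      ((θ + ρ) ^ 2 * (1 + θ * ρ) ^ 2 + (θ * ρ) ^ 2 * (1 - θ ^ 2) * (1 - ρ ^ 2))
    σ2 • (A * Λ * Aᵀ) = !![σθ2, θ * ρ * σθ2; θ * ρ * σθ2, σρ2] := by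
  intro θs ℓ A Λ σθ2 σρ2
  have hθρ := abs_lt.mp (abs_mul_lt_one hθ hρ)
  have hθ2 : 0 < 1 - θ ^ 2 := sub_pos.mpr ((sq_lt_one_iff_abs_lt_one θ).mpr hθ)
  have hρ2 : 0 < 1 - ρ ^ 2 := sub_pos.mpr ((sq_lt_one_iff_abs_lt_one ρ).mpr hρ)
  have hplus : 0 < 1 + θ * ρ := by linarith
  have hminus : 0 < 1 - θ * ρ := by linarith
  have hθs : θs * (1 + θ * ρ) = θ + ρ := div_mul_cancel₀ _ hplus.ne'
  have ha : 1 - θs ^ 2 = (1 - θ ^ 2) * (1 - ρ ^ 2) / (1 + θ * ρ) ^ 2 :=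
    one_sub_div_one_add_mul_sq hplus.ne'
  have hb : θ * ρ + θs ^ 2 + -(θ + ρ) * θs = θ * ρ * (1 - θs ^ 2) := by
    linear_combination θs * hθs
  have hscale : σ2 * (ℓ * (1 + θ * ρ) * (1 - θs ^ 2))⁻¹ ^ 2 * ℓ =
      (1 - θ * ρ) * (1 + θ * ρ) / ((1 - θ ^ 2) * (1 - ρ ^ 2)) := by
    simp only [ha, ℓ]
    field_simp
  have hfactor : σ2 • (A * Λ * Aᵀ) = (σ2 * (ℓ * (1 + θ * ρ) * (1 - θs ^ 2))⁻¹ ^ 2 * ℓ) •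
      (!![1 - θs ^ 2, 0; θ * ρ + θs ^ 2, -(θ + ρ)] * !![1, θs; θs, 1] *
        !![1 - θs ^ 2, 0; θ * ρ + θs ^ 2, -(θ + ρ)]ᵀ) := by
    simp only [A, Λ, transpose_smul, Matrix.smul_mul, Matrix.mul_smul, smul_smul]
    ring_nf
  rw [hfactor, lowerFinTwo_mul_mul_transpose, hb, hscale, ha]
  ext i j
  fin_cases i <;> fin_cases j <;>
    simp only [Fin.zero_eta, Fin.mk_one, Fin.isValue, Matrix.smul_apply, of_apply, cons_val',
      cons_val_zero, cons_val_one, cons_val_fin_one, smul_eq_mul, σθ2, σρ2] <;>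
    field_simp
  ring

open Matrix in
theorem stmt_17 (θ ρ σ2 : ℝ) (hθ : |θ| < 1) (hρ : |ρ| < 1) (hne : θ ≠ -ρ)
    (hσ : 0 < σ2) :
    let θs : ℝ := (θ + ρ) / (1 + θ * ρ)
    let ℓ : ℝ := σ2 * (1 + θ * ρ) / ((1 - θ ^ 2) * (1 - θ * ρ) * (1 - ρ ^ 2))
    let A : Matrix (Fin 2) (Fin 2) ℝ := (ℓ * (1 + θ * ρ) * (1 - θs ^ 2))⁻¹ •
      !![1 - θs ^ 2, 0; θ * ρ + θs ^ 2, -(θ + ρ)]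
    let Λ : Matrix (Fin 2) (Fin 2) ℝ := ℓ • !![1, θs; θs, 1]
    let σθ2 : ℝ := (1 - θ ^ 2) * (1 - θ * ρ) * (1 - ρ ^ 2) / (1 + θ * ρ) ^ 3
    let σρ2 : ℝ := (1 - θ * ρ) / (1 + θ * ρ) ^ 3 *
      ((θ + ρ) ^ 2 * (1 + θ * ρ) ^ 2 + (θ * ρ) ^ 2 * (1 - θ ^ 2) * (1 - ρ ^ 2))
    σ2 • (A * Λ * Aᵀ) = !![σθ2, θ * ρ * σθ2; θ * ρ * σθ2, σρ2] :=
  stmt_17_general θ ρ σ2 hθ hρ hσ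
end
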